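/- arXiv:2202.04805 — 4 statements merged into one kernel-verified Lean document; each statement's English description precedes it below -/
import Mathlib

section
/- Let M be a 3×3 real symmetric matrix with diagonal entries 1 that lies in the convex hull of matrices of the form (vᵢvⱼ)ᵢⱼ with v ∈ {-1,1}³. Then the off-diagonal entries M₀₁, M₀₂, M₁₂ cannot all equal -1/2. -/
/-!
For a sign vector `v ∈ {±1}³` we have `(v₀ + v₁ + v₂)² ≥ 1`, i.e. `v₀v₁ + v₀v₂ + v₁v₂ ≥ -1`.
Averaging over any probability distribution, the three off-diagonal entries of the expected
Gram matrix sum to at least `-1`, whereas three entries equal to `-1/2` sum to `-3/2`.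
-/

open Finset

lemma neg_one_le_mul_add_mul_add_mul_of_sign {a b c : ℝ} (ha : a = 1 ∨ a = -1)
    (hb : b = 1 ∨ b = -1) (hc : c = 1 ∨ c = -1) : -1 ≤ a * b + a * c + b * c := by
  rcases ha with rfl | rfl <;> rcases hb with rfl | rfl <;> rcases hc with rfl | rfl <;> norm_num

lemma Finset.le_sum_mul_of_sum_eq_one {ι R : Type*} [Semiring R] [PartialOrder R]
    [IsOrderedRing R] {s : Finset ι} {w f : ι → R} {m : R} (hw : ∀ i ∈ s, 0 ≤ w i)
    (hw₁ : ∑ i ∈ s, w i = 1) (hf : ∀ i ∈ s, m ≤ f i) : m ≤ ∑ i ∈ s, w i * f i :=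
  calc m = ∑ i ∈ s, w i * m := by rw [← sum_mul, hw₁, one_mul]
    _ ≤ ∑ i ∈ s, w i * f i :=
      sum_le_sum fun i hi => mul_le_mul_of_nonneg_left (hf i hi) (hw i hi)

theorem stmt_2_general (M : Matrix (Fin 3) (Fin 3) ℝ)
    (hconv : ∃ (n : ℕ) (c : Fin n → ℝ) (v : Fin n → Fin 3 → ℝ),
      (∀ t, 0 ≤ c t) ∧ (∑ t, c t = 1) ∧
      (∀ t i, v t i = 1 ∨ v t i = -1) ∧
      (∀ i j, M i j = ∑ t, c t * (v t i * v t j))) :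
    ¬ (M 0 1 = -1/2 ∧ M 0 2 = -1/2 ∧ M 1 2 = -1/2) := by
  rintro ⟨h01, h02, h12⟩
  obtain ⟨n, c, v, hc, hc₁, hv, hM⟩ := hconv
  have hsum : M 0 1 + M 0 2 + M 1 2 =
      ∑ t, c t * (v t 0 * v t 1 + v t 0 * v t 2 + v t 1 * v t 2) := by
    simp only [hM, ← sum_add_distrib, mul_add]
  have hge : -1 ≤ M 0 1 + M 0 2 + M 1 2 := hsum ▸ le_sum_mul_of_sum_eq_one (fun t _ => hc t) hc₁
    fun t _ => neg_one_le_mul_add_mul_add_mul_of_sign (hv t 0) (hv t 1) (hv t 2)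
  linarith

theorem stmt_2 (M : Matrix (Fin 3) (Fin 3) ℝ)
    (hsym : M.IsSymm) (hdiag : ∀ i, M i i = 1)
    (hconv : ∃ (n : ℕ) (c : Fin n → ℝ) (v : Fin n → Fin 3 → ℝ),
      (∀ t, 0 ≤ c t) ∧ (∑ t, c t = 1) ∧
      (∀ t i, v t i = 1 ∨ v t i = -1) ∧
      (∀ i j, M i j = ∑ t, c t * (v t i * v t j))) :
    ¬ (M 0 1 = -1/2 ∧ M 0 2 = -1/2 ∧ M 1 2 = -1/2) :=
  stmt_2_general M hconv
end

section
/- If x, y, z ∈ [-1,1] and M is the 3×3 matrix with diagonal 1 and off-diagonal entries M₀₁ = xy, M₀₂ = xz, M₁₂ = yz, then the Frobenius distance from M to the matrix with diagonal 1 and all off-diagonal entries equal to -1/3 is at least √2/3. -/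
/-!
Writing `a = xy`, `b = xz`, `c = yz`, the squared distance is `2 ((a + 1/3)² + (b + 1/3)² + (c + 1/3)²)`.
Since `abc = (xyz)² ≥ 0`, one of `a, b, c` is nonnegative, and the corresponding square alone is at
least `1/9`.
-/

lemma nonneg_or_nonneg_or_nonneg_of_mul_mul_nonneg {R : Type*} [CommRing R] [LinearOrder R]
    [IsStrictOrderedRing R] {a b c : R} (h : 0 ≤ a * b * c) : 0 ≤ a ∨ 0 ≤ b ∨ 0 ≤ c := by
  by_contra! hneg
  obtain ⟨ha, hb, hc⟩ := hneg
  exact (mul_neg_of_pos_of_neg (mul_pos_of_neg_of_neg ha hb) hc).not_ge h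

lemma sq_le_sq_add_sq_add_sq_of_mul_mul_nonneg {R : Type*} [CommRing R] [LinearOrder R]
    [IsStrictOrderedRing R] {a b c s : R} (hs : 0 ≤ s) (h : 0 ≤ a * b * c) :
    s ^ 2 ≤ (a + s) ^ 2 + (b + s) ^ 2 + (c + s) ^ 2 := by
  have sq_le_add_sq : ∀ t : R, 0 ≤ t → s ^ 2 ≤ (t + s) ^ 2 := fun t ht =>
    pow_le_pow_left₀ hs (le_add_of_nonneg_left ht) 2
  rcases nonneg_or_nonneg_or_nonneg_of_mul_mul_nonneg h with ha | hb | hc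
  · linarith [sq_le_add_sq a ha, sq_nonneg (b + s), sq_nonneg (c + s)]
  · linarith [sq_le_add_sq b hb, sq_nonneg (a + s), sq_nonneg (c + s)]
  · linarith [sq_le_add_sq c hc, sq_nonneg (a + s), sq_nonneg (b + s)]

lemma sum_sq_sub_correlation_eq (x y z : ℝ) :
    ∑ i : Fin 3, ∑ j : Fin 3,
        ((!![1, x*y, x*z; x*y, 1, y*z; x*z, y*z, 1] : Matrix (Fin 3) (Fin 3) ℝ) i j
          - (!![1, -1/3, -1/3; -1/3, 1, -1/3; -1/3, -1/3, 1] : Matrix (Fin 3) (Fin 3) ℝ) i j) ^ 2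
      = 2 * ((x * y + 1/3) ^ 2 + (x * z + 1/3) ^ 2 + (y * z + 1/3) ^ 2) := by
  simp only [Fin.sum_univ_three, Matrix.of_apply, Matrix.cons_val', Matrix.cons_val_zero,
    Matrix.cons_val_one, Matrix.cons_val_two, Matrix.empty_val', Matrix.cons_val_fin_one,
    Matrix.head_cons, Matrix.tail_cons, Matrix.head_fin_const]
  ring

theorem stmt_3_general (x y z : ℝ) :
    Real.sqrt (∑ i : Fin 3, ∑ j : Fin 3,
        ((!![1, x*y, x*z; x*y, 1, y*z; x*z, y*z, 1] : Matrix (Fin 3) (Fin 3) ℝ) i j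
          - (!![1, -1/3, -1/3; -1/3, 1, -1/3; -1/3, -1/3, 1] : Matrix (Fin 3) (Fin 3) ℝ) i j) ^ 2)
      ≥ Real.sqrt 2 / 3 := by
  have hprod : 0 ≤ x * y * (x * z) * (y * z) := by
    rw [show x * y * (x * z) * (y * z) = (x * y * z) ^ 2 by ring]
    positivity
  have hsq := sq_le_sq_add_sq_add_sq_of_mul_mul_nonneg (s := (1 / 3 : ℝ)) (by norm_num) hprod
  rw [ge_iff_le, sum_sq_sub_correlation_eq, Real.le_sqrt' (by positivity), div_pow,
    Real.sq_sqrt zero_le_two]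
  linarith

theorem stmt_3 (x y z : ℝ)
    (hx : x ∈ Set.Icc (-1 : ℝ) 1) (hy : y ∈ Set.Icc (-1 : ℝ) 1)
    (hz : z ∈ Set.Icc (-1 : ℝ) 1) :
    Real.sqrt (∑ i : Fin 3, ∑ j : Fin 3,
        ((!![1, x*y, x*z; x*y, 1, y*z; x*z, y*z, 1] : Matrix (Fin 3) (Fin 3) ℝ) i j
          - (!![1, -1/3, -1/3; -1/3, 1, -1/3; -1/3, -1/3, 1] : Matrix (Fin 3) (Fin 3) ℝ) i j) ^ 2)
      ≥ Real.sqrt 2 / 3 :=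
  stmt_3_general x y z
end

section
/- Let X and Y be jointly Gaussian real random variables, each with mean 0 and variance 1, and correlation ρ = E[XY]. Then E[sgn(X)·sgn(Y)] = (2/π)·arcsin(ρ). -/
/-!
In polar coordinates the standard Gaussian on `ℝ²` is the product of the radial law with density
`r e^{-r²/2}` and the uniform law on the circle, and `sgn (a·u) sgn (b·u)` depends only on the
angle of `u`. Writing `a = (cos α, sin α)`, `b = (cos β, sin β)`, the expectation is the mean over
the circle of `sgn (cos φ) sgn (cos (φ - θ))` with `θ = β - α`. This integrand is `π`-periodic in
`φ`, and for `0 ≤ θ ≤ π` it equals `-1` on an arc of length `θ` and `+1` on the rest of a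
half-period, giving `(2π - 4θ) / 2π = (2/π) arcsin (cos θ)`; evenness and `2π`-periodicity in `θ`
extend this to all `θ`.
-/

open MeasureTheory ProbabilityTheory Real Set Function

namespace Real

theorem measurable_sign : Measurable Real.sign :=
  Measurable.ite measurableSet_Iio measurable_const
    (Measurable.ite measurableSet_Ioi measurable_const measurable_const)

theorem abs_sign_le_one (x : ℝ) : |sign x| ≤ 1 := by
  rcases sign_apply_eq x with h | h | h <;> simp [h]

theorem sign_mul_of_pos {r : ℝ} (hr : 0 < r) (x : ℝ) : sign (r * x) = sign x := by
  rcases lt_trichotomy x 0 with hx | rfl | hx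
  · rw [sign_of_neg hx, sign_of_neg (mul_neg_of_pos_of_neg hr hx)]
  · simp
  · rw [sign_of_pos hx, sign_of_pos (mul_pos hr hx)]

theorem sign_cos_add_pi (φ : ℝ) : sign (cos (φ + π)) = -sign (cos φ) := by
  rw [cos_add_pi, sign_neg]

theorem sign_cos_mul_add_sin_mul {r : ℝ} (hr : 0 < r) (γ φ : ℝ) :
    sign (cos γ * (r * cos φ) + sin γ * (r * sin φ)) = sign (cos (φ - γ)) := by
  rw [← sign_mul_of_pos hr (cos (φ - γ)), cos_sub]
  congr 1
  ring

theorem exists_cos_sin_eq {x y : ℝ} (h : x ^ 2 + y ^ 2 = 1) : ∃ α, cos α = x ∧ sin α = y := by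
  obtain ⟨α, hα⟩ := (Complex.norm_eq_one_iff ⟨x, y⟩).1 (by
    rw [Complex.norm_def, Complex.normSq_mk, ← sq, ← sq, h, sqrt_one])
  exact ⟨α, by simpa using congrArg Complex.re hα, by simpa using congrArg Complex.im hα⟩

theorem integral_mul_exp_neg_mul_sq_Ioi {b : ℝ} (hb : 0 < b) :
    ∫ r in Ioi 0, r * exp (-b * r ^ 2) = (2 * b)⁻¹ := by
  exact_mod_cast integral_mul_cexp_neg_mul_sq (b := b) (by simpa using hb)

end Real

theorem Function.Periodic.eq_of_even_of_eqOn {α : Type*} {f g : ℝ → α} {T : ℝ} (hT : 0 < T)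
    (hf : Periodic f T) (hg : Periodic g T) (hfe : f.Even) (hge : g.Even)
    (h : EqOn f g (Icc 0 (T / 2))) : f = g := by
  funext θ
  set n := toIocDiv hT (-(T / 2)) θ
  set t := toIocMod hT (-(T / 2)) θ
  have ht : t ∈ Ioc (-(T / 2)) (T / 2) := by
    simpa [show -(T / 2) + T = T / 2 by ring] using toIocMod_mem_Ioc hT (-(T / 2)) θ
  rw [← hf.sub_zsmul_eq n, ← hg.sub_zsmul_eq n, self_sub_toIocDiv_zsmul]
  rcases le_total 0 t with h0 | h0
  · exact h ⟨h0, ht.2⟩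
  · rw [← hfe, ← hge]
    exact h ⟨neg_nonneg.2 h0, by linarith [ht.1]⟩

theorem intervalIntegral.integral_of_eqOn_Ioo {f : ℝ → ℝ} {a b c : ℝ} (hab : a ≤ b)
    (hf : EqOn f (fun _ => c) (Ioo a b)) : ∫ x in a..b, f x = (b - a) * c := by
  rw [intervalIntegral.integral_of_le hab, integral_Ioc_eq_integral_Ioo,
    setIntegral_congr_fun measurableSet_Ioo hf]
  simp [hab]

noncomputable def signCosProd (θ φ : ℝ) : ℝ := sign (cos φ) * sign (cos (φ - θ))

theorem signCosProd_periodic (θ : ℝ) : Periodic (signCosProd θ) π := fun φ => by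
  simp only [signCosProd, sign_cos_add_pi, add_sub_right_comm, neg_mul_neg]

theorem signCosProd_add_two_pi (θ : ℝ) : signCosProd (θ + 2 * π) = signCosProd θ := by
  funext φ
  rw [signCosProd, signCosProd, sub_add_eq_sub_sub, cos_sub_two_pi]

theorem signCosProd_neg (θ φ : ℝ) : signCosProd (-θ) φ = signCosProd θ (-φ) := by
  rw [signCosProd, signCosProd, cos_neg, ← cos_neg (-φ - θ)]
  ring_nf

theorem intervalIntegrable_signCosProd (θ a b : ℝ) :
    IntervalIntegrable (signCosProd θ) volume a b := by
  refine (intervalIntegrable_const (c := (1 : ℝ))).mono_fun ?_ (ae_of_all _ fun φ => ?_)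
  · exact ((measurable_sign.comp measurable_cos).mul
      (measurable_sign.comp (measurable_cos.comp (measurable_id.sub_const θ)))).aestronglyMeasurable
  · simpa [signCosProd, abs_mul] using
      mul_le_one₀ (abs_sign_le_one _) (abs_nonneg _) (abs_sign_le_one _)

theorem integral_signCosProd_half_period {θ : ℝ} (h0 : 0 ≤ θ) (hπ : θ ≤ π) :
    ∫ φ in -(π / 2)..π / 2, signCosProd θ φ = π - 2 * θ := by
  have hneg : ∫ φ in -(π / 2)..θ - π / 2, signCosProd θ φ = -θ := by
    refine (intervalIntegral.integral_of_eqOn_Ioo (c := -1) (by linarith) fun φ hφ => ?_).trans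
      (by ring)
    have h1 : 0 < cos φ := cos_pos_of_mem_Ioo ⟨hφ.1, by linarith [hφ.2]⟩
    have h2 : cos (φ - θ) < 0 := by
      rw [← cos_neg, neg_sub]
      exact cos_neg_of_pi_div_two_lt_of_lt (by linarith [hφ.2]) (by linarith [hφ.1])
    simp [signCosProd, sign_of_pos h1, sign_of_neg h2]
  have hpos : ∫ φ in θ - π / 2..π / 2, signCosProd θ φ = π - θ := by
    refine (intervalIntegral.integral_of_eqOn_Ioo (c := 1) (by linarith) fun φ hφ => ?_).trans
      (by ring)
    have h1 : 0 < cos φ := cos_pos_of_mem_Ioo ⟨by linarith [hφ.1], hφ.2⟩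
    have h2 : 0 < cos (φ - θ) := cos_pos_of_mem_Ioo ⟨by linarith [hφ.1], by linarith [hφ.2]⟩
    simp [signCosProd, sign_of_pos h1, sign_of_pos h2]
  rw [← intervalIntegral.integral_add_adjacent_intervals (intervalIntegrable_signCosProd ..)
    (intervalIntegrable_signCosProd ..), hneg, hpos]
  ring

theorem integral_signCosProd (θ t : ℝ) :
    ∫ φ in t..t + 2 * π, signCosProd θ φ = 4 * arcsin (cos θ) := by
  have hreduce : ∫ φ in t..t + 2 * π, signCosProd θ φ =
      2 * ∫ φ in -(π / 2)..π / 2, signCosProd θ φ := by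
    have := (signCosProd_periodic θ).intervalIntegral_add_zsmul_eq 2 t
      (intervalIntegrable_signCosProd θ)
    rw [(signCosProd_periodic θ).intervalIntegral_add_eq t (-(π / 2))] at this
    simpa [two_zsmul, ← two_mul, show -(π / 2) + π = π / 2 by ring] using this
  suffices (fun θ => 2 * ∫ φ in -(π / 2)..π / 2, signCosProd θ φ) =
      fun θ => 4 * arcsin (cos θ) from hreduce.trans (congrFun this θ)
  refine Periodic.eq_of_even_of_eqOn two_pi_pos (fun θ => ?_) (fun θ => ?_) (fun θ => ?_)
    (fun θ => ?_) fun θ hθ => ?_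
  · simp only [signCosProd_add_two_pi]
  · simp only [cos_add_two_pi]
  · simp only [signCosProd_neg]
    rw [intervalIntegral.integral_comp_neg (signCosProd θ), neg_neg]
  · simp only [cos_neg]
  · rw [show 2 * π / 2 = π by ring] at hθ
    rw [integral_signCosProd_half_period hθ.1 hθ.2, arcsin_eq_pi_div_two_sub_arccos,
      arccos_cos hθ.1 hθ.2]
    ring

theorem gaussianPDFReal_mul_gaussianPDFReal (x y : ℝ) :
    gaussianPDFReal 0 1 x * gaussianPDFReal 0 1 y = (2 * π)⁻¹ * exp (-(x ^ 2 + y ^ 2) / 2) := by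
  simp only [gaussianPDFReal, NNReal.coe_one, mul_one, sub_zero]
  rw [mul_mul_mul_comm, ← mul_inv, mul_self_sqrt (by positivity), ← exp_add]
  ring_nf

theorem integral_gaussianReal_prod (f : ℝ × ℝ → ℝ) :
    ∫ u, f u ∂(gaussianReal 0 1).prod (gaussianReal 0 1) =
      ∫ u, (2 * π)⁻¹ * exp (-(u.1 ^ 2 + u.2 ^ 2) / 2) * f u := by
  rw [gaussianReal_of_var_ne_zero 0 one_ne_zero, prod_withDensity (measurable_gaussianPDF 0 1)
    (measurable_gaussianPDF 0 1), ← Measure.volume_eq_prod,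
    integral_withDensity_eq_integral_toReal_smul (by fun_prop)
      (ae_of_all _ fun _ => ENNReal.mul_lt_top gaussianPDF_lt_top gaussianPDF_lt_top)]
  congr 1 with u
  rw [ENNReal.toReal_mul, toReal_gaussianPDF, toReal_gaussianPDF,
    gaussianPDFReal_mul_gaussianPDFReal, smul_eq_mul]

theorem integral_gaussianReal_prod_of_angular (f : ℝ × ℝ → ℝ) (g : ℝ → ℝ)
    (hfg : ∀ r > 0, ∀ φ, f (r * cos φ, r * sin φ) = g φ) :
    ∫ u, f u ∂(gaussianReal 0 1).prod (gaussianReal 0 1) = (2 * π)⁻¹ * ∫ φ in -π..π, g φ := by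
  have hpolar : EqOn (fun q : ℝ × ℝ => q.1 • ((2 * π)⁻¹ *
        exp (-((polarCoord.symm q).1 ^ 2 + (polarCoord.symm q).2 ^ 2) / 2) * f (polarCoord.symm q)))
      (fun q => q.1 * exp (-(1 / 2) * q.1 ^ 2) * ((2 * π)⁻¹ * g q.2)) polarCoord.target := by
    rintro ⟨r, φ⟩ ⟨hr, -⟩
    simp only [polarCoord_symm_apply, smul_eq_mul, hfg r hr, mul_pow, ← mul_add, cos_sq_add_sin_sq]
    ring_nf
  rw [integral_gaussianReal_prod, ← integral_comp_polarCoord_symm,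
    setIntegral_congr_fun polarCoord.open_target.measurableSet hpolar, polarCoord_target,
    Measure.volume_eq_prod, setIntegral_prod_mul (fun r => r * exp (-(1 / 2) * r ^ 2))
      (fun φ => (2 * π)⁻¹ * g φ), integral_mul_exp_neg_mul_sq_Ioi (by norm_num),
    integral_const_mul, intervalIntegral.integral_of_le (by linarith [pi_pos]),
    integral_Ioc_eq_integral_Ioo]
  norm_num

theorem stmt_6 (a b : ℝ × ℝ)
    (ha : a.1 ^ 2 + a.2 ^ 2 = 1) (hb : b.1 ^ 2 + b.2 ^ 2 = 1) :
    ∫ u : ℝ × ℝ,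
        Real.sign (a.1 * u.1 + a.2 * u.2) * Real.sign (b.1 * u.1 + b.2 * u.2)
        ∂((gaussianReal 0 1).prod (gaussianReal 0 1))
      = (2 / Real.pi) * Real.arcsin (a.1 * b.1 + a.2 * b.2) := by
  obtain ⟨α, hα₁, hα₂⟩ := exists_cos_sin_eq ha
  obtain ⟨β, hβ₁, hβ₂⟩ := exists_cos_sin_eq hb
  rw [← hα₁, ← hα₂, ← hβ₁, ← hβ₂, integral_gaussianReal_prod_of_angular _
      (fun φ => signCosProd (β - α) (φ - α)) fun r hr φ => by
        simp only [sign_cos_mul_add_sin_mul hr, signCosProd, sub_sub_sub_cancel_right],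
    intervalIntegral.integral_comp_sub_right (signCosProd (β - α)),
    show π - α = -π - α + 2 * π by ring, integral_signCosProd, cos_sub]
  field_simp
  ring
end

section
/- Let t₁,…,t_{2k+1} be i.i.d. random vectors in {-1,1}^D whose coordinates are i.i.d. uniform on {-1,1}. Fix a coordinate and an index i. The probability that the sign of (∑ⱼ tⱼ) at that coordinate agrees with the sign of tᵢ at that coordinate equals (1 + (1/4^k)·C(2k,k))/2. -/
/-!
Multiplying by the sign of `tᵢ` turns `sgn (∑ⱼ tⱼ) = tᵢ` into the statement that at least `k` of
the other `2k` signs agree with `tᵢ`. Recording `tᵢ` together with the set of agreeing indices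
identifies sign vectors with pairs (a sign, a subset of a `2k`-set). Complementation matches the
subsets of size `≥ k` with those of size `≤ k`; together these two families cover everything and
overlap in the `C(2k, k)` subsets of size exactly `k`, so twice their number is `4ᵏ + C(2k, k)`.
The remaining coordinates of the vectors contribute a common factor that cancels.
-/

open Finset

abbrev boolSign (b : Bool) : ℤ := if b then 1 else -1

@[simp] theorem boolSign_true : boolSign true = 1 := rfl

@[simp] theorem boolSign_false : boolSign false = -1 := rfl

theorem boolSign_mul_boolSign (a b : Bool) :
    boolSign a * boolSign b = 2 * (if b = a then 1 else 0) - 1 := by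
  cases a <;> cases b <;> rfl

theorem sign_eq_boolSign_iff (x : ℤ) (b : Bool) : x.sign = boolSign b ↔ 0 < boolSign b * x := by
  cases b <;> simp [Int.sign_eq_one_iff_pos, Int.sign_eq_neg_one_iff_neg]

section Agreement

variable {ι : Type*} [Fintype ι] [DecidableEq ι]

def agreeSet (s : ι → Bool) (i : ι) : Finset ι := {j ∈ univ.erase i | s j = s i}

theorem boolSign_mul_sum_boolSign (s : ι → Bool) (i : ι) :
    boolSign (s i) * ∑ j, boolSign (s j) = 1 + 2 * #(agreeSet s i) - #(univ.erase i) := by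
  rw [mul_sum, ← add_sum_erase _ _ (mem_univ i)]
  simp only [boolSign_mul_boolSign, sum_sub_distrib, ← mul_sum, sum_boole, sum_const, agreeSet,
    if_pos, nsmul_eq_mul, mul_one]
  ring

theorem sign_sum_boolSign_eq_iff {k : ℕ} (hι : Fintype.card ι = 2 * k + 1) (s : ι → Bool)
    (i : ι) : Int.sign (∑ j, boolSign (s j)) = boolSign (s i) ↔ k ≤ #(agreeSet s i) := by
  rw [sign_eq_boolSign_iff, boolSign_mul_sum_boolSign, card_erase_of_mem (mem_univ i), card_univ,
    hι]
  omega

theorem card_filter_agreeSet (i : ι) (P : Finset ι → Prop) [DecidablePred P] :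
    #{s : ι → Bool | P (agreeSet s i)} = 2 * #{B ∈ (univ.erase i).powerset | P B} := by
  let glue (b : Bool) (B : Finset ι) (j : ι) : Bool := if j = i ∨ j ∈ B then b else !b
  have agreeSet_glue (b : Bool) {B : Finset ι} (hB : B ⊆ univ.erase i) :
      agreeSet (glue b B) i = B := by
    ext j
    by_cases hj : j = i
    · subst hj; simpa [agreeSet, glue] using fun h => (mem_erase.1 (hB h)).1 rfl
    · cases b <;> simp [agreeSet, glue, hj]
  rw [← Fintype.card_bool, ← card_univ, ← card_product]
  refine card_nbij' (fun s => (s i, agreeSet s i)) (fun x => glue x.1 x.2) ?_ ?_ ?_ ?_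
  · intro s hs
    simp only [mem_coe, mem_product, mem_filter, mem_univ, true_and, mem_powerset] at hs ⊢
    exact ⟨filter_subset _ _, hs⟩
  · rintro ⟨b, B⟩ hB
    simp only [mem_coe, mem_product, mem_filter, mem_univ, true_and, mem_powerset] at hB ⊢
    rw [agreeSet_glue b hB.1]
    exact hB.2
  · intro s _
    funext j
    by_cases hj : j = i <;> cases h : s j <;> cases h' : s i <;> simp_all [agreeSet, glue]
  · rintro ⟨b, B⟩ hB
    simp only [mem_coe, mem_product, mem_filter, mem_univ, true_and, mem_powerset] at hB
    rw [Prod.mk.injEq, agreeSet_glue b hB.1]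
    simp [glue]

end Agreement

theorem two_mul_card_filter_powerset_le_card {α : Type*} [DecidableEq α] {k : ℕ} (E : Finset α)
    (hE : #E = 2 * k) : 2 * #{B ∈ E.powerset | k ≤ #B} = 4 ^ k + (2 * k).choose k := by
  have hcompl : #{B ∈ E.powerset | k ≤ #B} = #{B ∈ E.powerset | #B ≤ k} := by
    refine card_nbij' (E \ ·) (E \ ·) ?_ ?_ ?_ ?_ <;> intro B hB <;>
      simp only [coe_filter, mem_powerset, Set.mem_ofPred_eq] at hB ⊢
    · rw [card_sdiff_of_subset hB.1]
      exact ⟨sdiff_subset, by omega⟩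
    · rw [card_sdiff_of_subset hB.1]
      exact ⟨sdiff_subset, by have := card_le_card hB.1; omega⟩
    · exact Finset.sdiff_sdiff_eq_self hB.1
    · exact Finset.sdiff_sdiff_eq_self hB.1
  have hunion : {B ∈ E.powerset | k ≤ #B} ∪ {B ∈ E.powerset | #B ≤ k} = E.powerset := by
    rw [← filter_or, filter_true_of_mem fun B _ => le_total k #B]
  have hinter : {B ∈ E.powerset | k ≤ #B} ∩ {B ∈ E.powerset | #B ≤ k} = E.powersetCard k := by
    rw [← filter_and, powersetCard_eq_filter]
    exact filter_congr fun B _ => by omega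
  have hcard := card_union_add_card_inter {B ∈ E.powerset | k ≤ #B} {B ∈ E.powerset | #B ≤ k}
  rw [hunion, hinter, card_powerset, card_powersetCard, hE, pow_mul, ← hcompl] at hcard
  norm_num at hcard
  omega

theorem card_filter_apply_eq_mul {ι κ β : Type*} [Fintype ι] [DecidableEq ι] [Fintype κ]
    [DecidableEq κ] [Fintype β] (c : κ) (p : (ι → β) → Prop) [DecidablePred p] :
    #{t : ι → κ → β | p (fun j => t j c)} =
      #{s | p s} * (Fintype.card β ^ Fintype.card ι) ^ (Fintype.card κ - 1) := by
  let e := (Equiv.piComm fun (_ : ι) (_ : κ) => β).trans (Equiv.piSplitAt c fun _ => ι → β)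
  have he (t : ι → κ → β) :
      t ∈ ({t | p (fun j => t j c)} : Finset _) ↔ e t ∈ ({s | p s} : Finset _) ×ˢ univ := by
    simp only [mem_filter, mem_univ, true_and, mem_product, and_true, e, Equiv.trans_apply,
      Equiv.piSplitAt_apply]
    rfl
  rw [card_equiv e he, card_product, card_univ, Fintype.card_fun, Fintype.card_fun,
    Fintype.card_subtype_compl, Fintype.card_subtype_eq]

theorem stmt_10_general (k D : ℕ) (c : Fin D) (i : Fin (2 * k + 1)) :
    ((Finset.univ.filter (fun t : Fin (2 * k + 1) → Fin D → Bool =>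
        Int.sign (∑ j, (if t j c then (1 : ℤ) else -1)) = (if t i c then (1 : ℤ) else -1))).card
        : ℝ) / 2 ^ ((2 * k + 1) * D)
      = (1 + (Nat.choose (2 * k) k : ℝ) / 4 ^ k) / 2 := by
  have hcount : #{s : Fin (2 * k + 1) → Bool | (∑ j, boolSign (s j)).sign = boolSign (s i)} =
      4 ^ k + (2 * k).choose k := by
    rw [filter_congr fun s _ => sign_sum_boolSign_eq_iff (Fintype.card_fin _) s i,
      card_filter_agreeSet i (k ≤ #·), two_mul_card_filter_powerset_le_card]
    simp
  obtain ⟨d, rfl⟩ := Nat.exists_eq_add_one.mpr c.pos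
  rw [card_filter_apply_eq_mul c fun s => (∑ j, boolSign (s j)).sign = boolSign (s i), hcount]
  simp only [Fintype.card_bool, Fintype.card_fin, add_tsub_cancel_right]
  push_cast
  rw [show (4 : ℝ) ^ k = 2 ^ (2 * k) by rw [pow_mul]; norm_num]
  field_simp
  ring

theorem stmt_10 (k D : ℕ) (hD : 1 ≤ D) (c : Fin D) (i : Fin (2 * k + 1)) :
    ((Finset.univ.filter (fun t : Fin (2 * k + 1) → Fin D → Bool =>
        Int.sign (∑ j, (if t j c then (1 : ℤ) else -1)) = (if t i c then (1 : ℤ) else -1))).card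
        : ℝ) / 2 ^ ((2 * k + 1) * D)
      = (1 + (Nat.choose (2 * k) k : ℝ) / 4 ^ k) / 2 :=
  stmt_10_general k D c i
end
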